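/- Suppose the Poincaré inequality holds with finite constant c: for every F ∈ 𝓕, ∫_ℝ (F(x) − m̄(F))² dm(x) ≤ c·∫_ℝ (dF/dS)² dS. Let a ∈ ℝ be such that m((−∞,a]) > 0. Then the Hardy inequality over (a,∞) holds with the finite constant c / (1 − m((a,∞))/m(ℝ)): for every F ∈ 𝓕, ∫_{(a,∞)} (F(x) − F(a))² dm(x) ≤ (c / (1 − m((a,∞))/m(ℝ))) · ∫_{(a,∞)} (dF/dS)² dS. -/

import Mathlib

/-!
Truncate `F` at `a`: the function `G = 1_{(a,∞)} (F - F a)` has derivative `1_{(a,∞)} f`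
and vanishes on `(-∞, a]`, a set of mass `Q = m((-∞,a]) > 0`. For such a function the
Cauchy–Schwarz bound `(∫ G)² ≤ m((a,∞)) ∫ G²` turns the identity
`m(ℝ) ∫ (G - m̄ G)² = m(ℝ) ∫ G² - (∫ G)²` into `Q ∫ G² ≤ m(ℝ) ∫ (G - m̄ G)²`,
so the Poincaré inequality for `G` is the Hardy inequality with constant `c m(ℝ) / Q`.
-/

open MeasureTheory Set
open scoped ENNReal

section Variance

variable {α : Type*} [MeasurableSpace α] {m : Measure α} {G : α → ℝ}

lemma MeasureTheory.MemLp.ofReal_integral_sq (hG : MemLp G 2 m) :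
    ENNReal.ofReal (∫ x, G x ^ 2 ∂m) = ∫⁻ x, ENNReal.ofReal (G x ^ 2) ∂m :=
  ofReal_integral_eq_lintegral_ofReal hG.integrable_sq (ae_of_all _ fun _ => sq_nonneg _)

variable [IsFiniteMeasure m]

lemma integral_sub_const_sq (hG : MemLp G 2 m) (t : ℝ) :
    ∫ x, (G x - t) ^ 2 ∂m = ∫ x, G x ^ 2 ∂m - 2 * t * ∫ x, G x ∂m + t ^ 2 * m.real univ := by
  have hG1 : Integrable G m := hG.integrable one_le_two
  have hexpand : ∀ x, (G x - t) ^ 2 = G x ^ 2 - 2 * t * G x + t ^ 2 := fun x => by ring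
  have hG2 : Integrable (fun x => G x ^ 2) m := hG.integrable_sq
  have hG1t : Integrable (fun x => 2 * t * G x) m := hG1.const_mul _
  have hG21 : Integrable (fun x => G x ^ 2 - 2 * t * G x) m := hG2.sub hG1t
  simp_rw [hexpand]
  rw [integral_add hG21 (integrable_const _), integral_sub hG2 hG1t, integral_const_mul,
    integral_const, smul_eq_mul, mul_comm (m.real univ)]

lemma mul_integral_sq_sub_mean (hG : MemLp G 2 m) :
    m.real univ * ∫ x, (G x - (m.real univ)⁻¹ * ∫ y, G y ∂m) ^ 2 ∂m =
      m.real univ * ∫ x, G x ^ 2 ∂m - (∫ x, G x ∂m) ^ 2 := by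
  by_cases hM : m.real univ = 0
  · have hm : m = 0 := Measure.measure_univ_eq_zero.mp
      ((measureReal_eq_zero_iff (measure_ne_top m univ)).mp hM)
    simp [hm]
  · rw [integral_sub_const_sq hG]
    field_simp
    ring

lemma sq_integral_le_mul_integral_sq (hG : MemLp G 2 m) :
    (∫ x, G x ∂m) ^ 2 ≤ m.real univ * ∫ x, G x ^ 2 ∂m := by
  have hvar : 0 ≤ m.real univ * ∫ x, (G x - (m.real univ)⁻¹ * ∫ y, G y ∂m) ^ 2 ∂m :=
    mul_nonneg measureReal_nonneg (integral_nonneg fun _ => sq_nonneg _)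
  rw [mul_integral_sq_sub_mean hG] at hvar
  linarith

lemma mul_integral_sq_le_mul_variance {s : Set α} (hs : MeasurableSet s) (hG : MemLp G 2 m)
    (hzero : ∀ x ∈ s, G x = 0) :
    m.real s * ∫ x, G x ^ 2 ∂m ≤
      m.real univ * ∫ x, (G x - (m.real univ)⁻¹ * ∫ y, G y ∂m) ^ 2 ∂m := by
  have hzero' : ∀ x ∉ sᶜ, G x = 0 := fun x hx => hzero x (not_not.mp hx)
  have hCS := sq_integral_le_mul_integral_sq (hG.restrict sᶜ)
  rw [measureReal_restrict_apply_univ, setIntegral_eq_integral_of_forall_compl_eq_zero hzero',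
    setIntegral_eq_integral_of_forall_compl_eq_zero fun x hx => by simp [hzero' x hx]] at hCS
  rw [measureReal_compl hs] at hCS
  rw [mul_integral_sq_sub_mean hG]
  linarith

lemma ofReal_integral_sq_le_mul_lintegral_sq_sub_mean {s : Set α} (hs : MeasurableSet s)
    (hG : MemLp G 2 m) (hzero : ∀ x ∈ s, G x = 0) (hs_pos : 0 < m.real s) :
    ENNReal.ofReal (∫ x, G x ^ 2 ∂m) ≤ ENNReal.ofReal (m.real univ / m.real s) *
      ∫⁻ x, ENNReal.ofReal ((G x - (m.real univ)⁻¹ * ∫ y, G y ∂m) ^ 2) ∂m := by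
  have hGc : MemLp (fun x => G x - (m.real univ)⁻¹ * ∫ y, G y ∂m) 2 m := hG.sub (memLp_const _)
  rw [← hGc.ofReal_integral_sq, ← ENNReal.ofReal_mul (div_nonneg measureReal_nonneg hs_pos.le)]
  refine ENNReal.ofReal_le_ofReal ?_
  rw [div_mul_eq_mul_div, le_div_iff₀ hs_pos]
  linarith [mul_integral_sq_le_mul_variance hs hG hzero]

end Variance

lemma lintegral_ofReal_indicator_sq {α : Type*} [MeasurableSpace α] (μ : Measure α)
    {s : Set α} (hs : MeasurableSet s) (h : α → ℝ) :
    ∫⁻ x, ENNReal.ofReal (s.indicator h x ^ 2) ∂μ = ∫⁻ x in s, ENNReal.ofReal (h x ^ 2) ∂μ := by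
  rw [← lintegral_indicator hs]
  congr 1
  funext x
  by_cases hx : x ∈ s <;> simp [hx]

/-- The paper's `dF ≪ dS` with `dF/dS = f`, the measure `μ` standing for `dS`. -/
def IsPrimitive (μ : Measure ℝ) (F f : ℝ → ℝ) : Prop :=
  ∀ x y : ℝ, x < y → F y - F x = ∫ t in Ioc x y, f t ∂μ

lemma IsPrimitive.indicator_Ioi {μ : Measure ℝ} {F f : ℝ → ℝ} (h : IsPrimitive μ F f) (a : ℝ) :
    IsPrimitive μ ((Ioi a).indicator fun x => F x - F a) ((Ioi a).indicator f) := by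
  intro x y hxy
  have htrunc : ∀ z, (Ioi a).indicator (fun x => F x - F a) z = F (max z a) - F a := by
    intro z
    by_cases hz : a < z
    · simp [hz, max_eq_left hz.le]
    · simp [hz, max_eq_right (not_lt.mp hz)]
  rw [setIntegral_indicator measurableSet_Ioi, Ioc_inter_Ioi, htrunc, htrunc]
  rcases le_or_gt y a with hya | hay
  · simp [max_eq_right hya, max_eq_right (hxy.le.trans hya), Ioc_eq_empty (not_lt.mpr hya)]
  · rw [max_eq_left hay.le, ← h _ _ (max_lt hxy hay)]
    ring

theorem hardy_from_poincare_general
    (μS : Measure ℝ)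
    (m : Measure ℝ) [IsFiniteMeasure m]
    (c : ℝ)
    (hPoincare : ∀ F f : ℝ → ℝ, MemLp F 2 m → Integrable f μS → MemLp f 2 μS →
      (∀ x y : ℝ, x < y → F y - F x = ∫ t in Ioc x y, f t ∂μS) →
      ∫⁻ x, ENNReal.ofReal ((F x - (m univ).toReal⁻¹ * ∫ y, F y ∂m) ^ 2) ∂m ≤
        ENNReal.ofReal c * ∫⁻ t, ENNReal.ofReal (f t ^ 2) ∂μS)
    (a : ℝ) (ha : 0 < m (Iic a)) :
    ∀ F f : ℝ → ℝ, MemLp F 2 m → Integrable f μS → MemLp f 2 μS →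
      (∀ x y : ℝ, x < y → F y - F x = ∫ t in Ioc x y, f t ∂μS) →
      ∫⁻ x in Ioi a, ENNReal.ofReal ((F x - F a) ^ 2) ∂m ≤
        ENNReal.ofReal (c / (1 - (m (Ioi a)).toReal / (m univ).toReal)) *
          ∫⁻ t in Ioi a, ENNReal.ofReal (f t ^ 2) ∂μS := by
  intro F f hF hf hf2 hFf
  set G := (Ioi a).indicator fun x => F x - F a
  have hG : MemLp G 2 m := (hF.sub (memLp_const _)).indicator measurableSet_Ioi
  have hPoin := hPoincare G ((Ioi a).indicator f) hG (hf.indicator measurableSet_Ioi)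
    (hf2.indicator measurableSet_Ioi) (IsPrimitive.indicator_Ioi hFf a)
  rw [lintegral_ofReal_indicator_sq _ measurableSet_Ioi] at hPoin
  have hQ : 0 < m.real (Iic a) := ENNReal.toReal_pos ha.ne' (measure_ne_top _ _)
  have hconst : c / (1 - (m (Ioi a)).toReal / (m univ).toReal) =
      m.real univ / m.real (Iic a) * c := by
    have hM : 0 < m.real univ := hQ.trans_le (measureReal_mono (subset_univ _))
    rw [← measureReal_def, ← measureReal_def, ← compl_Iic, measureReal_compl measurableSet_Iic,
      one_sub_div hM.ne', sub_sub_cancel, div_div_eq_mul_div]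
    ring
  have hLHS : ∫⁻ x in Ioi a, ENNReal.ofReal ((F x - F a) ^ 2) ∂m =
      ∫⁻ x, ENNReal.ofReal (G x ^ 2) ∂m :=
    (lintegral_ofReal_indicator_sq _ measurableSet_Ioi _).symm
  rw [hLHS, ← hG.ofReal_integral_sq, hconst, ENNReal.ofReal_mul (by positivity), mul_assoc]
  refine (ofReal_integral_sq_le_mul_lintegral_sq_sub_mean measurableSet_Iic hG
    (fun x hx => indicator_of_notMem (not_lt.mpr hx) _) hQ).trans ?_
  gcongr
  exact hPoin

/-- If the Poincaré inequality holds with finite constant `c`, and `a ∈ ℝ` is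
such that `m((−∞,a]) > 0`, then the Hardy inequality over `(a,∞)` holds with the finite
constant `c / (1 − m((a,∞))/m(ℝ))`. -/
theorem hardy_from_poincare
    (S : ℝ → ℝ) (hScont : Continuous S) (hSmono : StrictMono S)
    (hStop : Filter.Tendsto S Filter.atTop Filter.atTop)
    (hSbot : Filter.Tendsto S Filter.atBot Filter.atBot)
    (μS : Measure ℝ)
    (hμS : ∀ c d : ℝ, c ≤ d → μS (Ioc c d) = ENNReal.ofReal (S d - S c))
    (m : Measure ℝ) [IsFiniteMeasure m] (hm : m univ ≠ 0)
    (c : ℝ)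
    (hPoincare : ∀ F f : ℝ → ℝ, MemLp F 2 m → Integrable f μS → MemLp f 2 μS →
      (∀ x y : ℝ, x < y → F y - F x = ∫ t in Ioc x y, f t ∂μS) →
      ∫⁻ x, ENNReal.ofReal ((F x - (m univ).toReal⁻¹ * ∫ y, F y ∂m) ^ 2) ∂m ≤
        ENNReal.ofReal c * ∫⁻ t, ENNReal.ofReal (f t ^ 2) ∂μS)
    (a : ℝ) (ha : 0 < m (Iic a)) :
    ∀ F f : ℝ → ℝ, MemLp F 2 m → Integrable f μS → MemLp f 2 μS →
      (∀ x y : ℝ, x < y → F y - F x = ∫ t in Ioc x y, f t ∂μS) →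
      ∫⁻ x in Ioi a, ENNReal.ofReal ((F x - F a) ^ 2) ∂m ≤
        ENNReal.ofReal (c / (1 - (m (Ioi a)).toReal / (m univ).toReal)) *
          ∫⁻ t in Ioi a, ENNReal.ofReal (f t ^ 2) ∂μS :=
  hardy_from_poincare_general μS m c hPoincare a ha
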